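/- arXiv:2311.16891 — 4 statements merged into one kernel-verified Lean document; each statement's English description precedes it below -/
import Mathlib

section
/- Let M be a topological space and N ⊆ M a subspace whose inclusion i : N ↪ M is null-homotopic, i.e. homotopic to the constant map with value some point p₀ ∈ M. Then the space P_N M of paths in M with both endpoints in N is homotopy equivalent to the product N × N × Ω_{p₀}M. -/
open unitInterval

namespace Statement1Aux

noncomputable section

def cl : ℝ → I := Set.projIcc 0 1 zero_le_one

lemma cl_coe {r : ℝ} (h0 : 0 ≤ r) (h1 : r ≤ 1) : ((cl r : I) : ℝ) = r := by
  simp [cl, Set.projIcc_of_mem zero_le_one ⟨h0, h1⟩]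

lemma cl_nonpos {r : ℝ} (h : r ≤ 0) : cl r = 0 := by
  rw [cl, Set.projIcc_of_le_left _ h]; rfl

lemma cl_one_le {r : ℝ} (h : 1 ≤ r) : cl r = 1 := by
  rw [cl, Set.projIcc_of_right_le _ h]; rfl

lemma cl_zero : cl 0 = 0 := cl_nonpos le_rfl
lemma cl_one : cl 1 = 1 := cl_one_le le_rfl

lemma cl_self (t : I) : cl t = t := Subtype.ext (cl_coe t.2.1 t.2.2)

lemma continuous_cl : Continuous cl := continuous_projIcc

lemma coe_I_one : ((1:I):ℝ) = 1 := rfl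
lemma coe_I_zero : ((0:I):ℝ) = 0 := rfl

variable {M : Type*} [TopologicalSpace M] {N : Set M} {p₀ : M}

/-- generic continuity of `q ↦ H (cl (e q), n q)` -/
lemma contH {X : Type*} [TopologicalSpace X] (H : C(I × ↥N, M)) {e : X → ℝ} {n : X → ↥N}
    (he : Continuous e) (hn : Continuous n) :
    Continuous fun q => H (cl (e q), n q) :=
  H.continuous.comp ((continuous_cl.comp he).prodMk hn)

/-- generic continuity of `q ↦ Γ q (cl (e q))` -/
lemma contEv {X : Type*} [TopologicalSpace X] {Γ : X → C(I, M)} {e : X → ℝ}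
    (hΓ : Continuous Γ) (he : Continuous e) :
    Continuous fun q => Γ q (cl (e q)) :=
  continuous_eval.comp (hΓ.prodMk (continuous_cl.comp he))

/-- loop associated to a path with endpoints in N -/
def fF (H : C(I × ↥N, M)) (x₀ x₁ : ↥N) (γ : I → M) (t : I) : M :=
  if (t : ℝ) ≤ 1/4 then H (cl (1 - 4*(t:ℝ)), x₀)
  else if (t : ℝ) ≤ 3/4 then γ (cl (2*(t:ℝ) - 1/2))
  else H (cl (4*(t:ℝ) - 3), x₁)

/-- path associated to a loop and two points of N -/
def fG (H : C(I × ↥N, M)) (x₀ x₁ : ↥N) (ℓ : I → M) (t : I) : M :=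
  if (t : ℝ) ≤ 1/4 then H (cl (4*(t:ℝ)), x₀)
  else if (t : ℝ) ≤ 3/4 then ℓ (cl (2*(t:ℝ) - 1/2))
  else H (cl (4 - 4*(t:ℝ)), x₁)

/-- homotopy from the identity to G ∘ F -/
def fK (H : C(I × ↥N, M)) (x₀ x₁ : ↥N) (γ : I → M) (s t : I) : M :=
  if (t : ℝ) ≤ (s:ℝ)/4 then H (cl (4*(t:ℝ)), x₀)
  else if (t : ℝ) ≤ 3*(s:ℝ)/8 then H (cl (3*(s:ℝ) - 8*(t:ℝ)), x₀)
  else if (t : ℝ) ≤ 1 - 3*(s:ℝ)/8 then γ (cl ((8*(t:ℝ) - 3*(s:ℝ))/(8 - 6*(s:ℝ))))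
  else if (t : ℝ) ≤ 1 - (s:ℝ)/4 then H (cl (8*(t:ℝ) - 8 + 3*(s:ℝ)), x₁)
  else H (cl (4 - 4*(t:ℝ)), x₁)

/-- homotopy from the identity to F ∘ G -/
def fK' (H : C(I × ↥N, M)) (x₀ x₁ : ↥N) (ℓ : I → M) (s t : I) : M :=
  if (t : ℝ) ≤ (s:ℝ)/4 then H (cl (1 - 4*(t:ℝ)), x₀)
  else if (t : ℝ) ≤ 3*(s:ℝ)/8 then H (cl (1 - 3*(s:ℝ) + 8*(t:ℝ)), x₀)
  else if (t : ℝ) ≤ 1 - 3*(s:ℝ)/8 then ℓ (cl ((8*(t:ℝ) - 3*(s:ℝ))/(8 - 6*(s:ℝ))))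
  else if (t : ℝ) ≤ 1 - (s:ℝ)/4 then H (cl (9 - 3*(s:ℝ) - 8*(t:ℝ)), x₁)
  else H (cl (4*(t:ℝ) - 3), x₁)

section PointwiseValues

variable (H : C(I × ↥N, M)) (x₀ x₁ : ↥N) (γ ℓ : I → M)

lemma fF_zero (h1 : ∀ x : ↥N, H (1, x) = p₀) : fF H x₀ x₁ γ 0 = p₀ := by
  rw [fF, if_pos (by norm_num : ((0:I):ℝ) ≤ 1/4)]
  rw [show (1 : ℝ) - 4*((0:I):ℝ) = 1 by norm_num, cl_one, h1]

lemma fF_one (h1 : ∀ x : ↥N, H (1, x) = p₀) : fF H x₀ x₁ γ 1 = p₀ := by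
  rw [fF, if_neg (by norm_num : ¬ ((1:I):ℝ) ≤ 1/4), if_neg (by norm_num : ¬ ((1:I):ℝ) ≤ 3/4)]
  rw [show (4 : ℝ)*((1:I):ℝ) - 3 = 1 by norm_num, cl_one, h1]

lemma fG_zero (h0 : ∀ x : ↥N, H (0, x) = x) : fG H x₀ x₁ ℓ 0 = x₀ := by
  rw [fG, if_pos (by norm_num : ((0:I):ℝ) ≤ 1/4)]
  rw [show (4 : ℝ)*((0:I):ℝ) = 0 by norm_num, cl_zero, h0]

lemma fG_one (h0 : ∀ x : ↥N, H (0, x) = x) : fG H x₀ x₁ ℓ 1 = x₁ := by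
  rw [fG, if_neg (by norm_num : ¬ ((1:I):ℝ) ≤ 1/4), if_neg (by norm_num : ¬ ((1:I):ℝ) ≤ 3/4)]
  rw [show (4 : ℝ) - 4*((1:I):ℝ) = 0 by norm_num, cl_zero, h0]

variable (s : I)

lemma fK_at0 (h0 : ∀ x : ↥N, H (0, x) = x) : fK H x₀ x₁ γ s 0 = x₀ := by
  rw [fK, if_pos (by rw [coe_I_zero]; exact div_nonneg s.2.1 (by norm_num))]
  rw [show (4 : ℝ)*((0:I):ℝ) = 0 by norm_num, cl_zero, h0]

lemma fK_at1 (h0 : ∀ x : ↥N, H (0, x) = x) (hx1 : (x₁ : M) = γ 1) :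
    fK H x₀ x₁ γ s 1 = x₁ := by
  have hs0 := s.2.1; have hs1 := s.2.2
  rw [fK]
  by_cases h3 : ((1:I):ℝ) ≤ 1 - 3*(s:ℝ)/8
  · have hs : (s:ℝ) = 0 := by simp only [coe_I_one] at h3; linarith
    rw [if_neg (by simp [hs]), if_neg (by simp [hs]), if_pos h3]
    rw [show (8*((1:I):ℝ) - 3*(s:ℝ))/(8 - 6*(s:ℝ)) = 1 by rw [hs]; norm_num, cl_one, hx1]
  · have hs : 0 < (s:ℝ) := by simp only [coe_I_one] at h3; by_contra h; push_neg at h; linarith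
    rw [if_neg (by simp only [coe_I_one]; intro h; linarith),
        if_neg (by simp only [coe_I_one]; intro h; linarith), if_neg h3,
        if_neg (by simp only [coe_I_one]; intro h; linarith)]
    rw [show (4:ℝ) - 4*((1:I):ℝ) = 0 by norm_num, cl_zero, h0]

lemma fK'_at0 (h1 : ∀ x : ↥N, H (1, x) = p₀) : fK' H x₀ x₁ ℓ s 0 = p₀ := by
  rw [fK', if_pos (by rw [coe_I_zero]; exact div_nonneg s.2.1 (by norm_num))]
  rw [show (1 : ℝ) - 4*((0:I):ℝ) = 1 by norm_num, cl_one, h1]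

lemma fK'_at1 (h1 : ∀ x : ↥N, H (1, x) = p₀) (hl1 : ℓ 1 = p₀) :
    fK' H x₀ x₁ ℓ s 1 = p₀ := by
  have hs0 := s.2.1; have hs1 := s.2.2
  rw [fK']
  by_cases h3 : ((1:I):ℝ) ≤ 1 - 3*(s:ℝ)/8
  · have hs : (s:ℝ) = 0 := by simp only [coe_I_one] at h3; linarith
    rw [if_neg (by simp [hs]), if_neg (by simp [hs]), if_pos h3]
    rw [show (8*((1:I):ℝ) - 3*(s:ℝ))/(8 - 6*(s:ℝ)) = 1 by rw [hs]; norm_num, cl_one, hl1]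
  · have hs : 0 < (s:ℝ) := by simp only [coe_I_one] at h3; by_contra h; push_neg at h; linarith
    rw [if_neg (by simp only [coe_I_one]; intro h; linarith),
        if_neg (by simp only [coe_I_one]; intro h; linarith), if_neg h3,
        if_neg (by simp only [coe_I_one]; intro h; linarith)]
    rw [show (4:ℝ)*((1:I):ℝ) - 3 = 1 by norm_num, cl_one, h1]

lemma fK_zero (h0 : ∀ x : ↥N, H (0, x) = x) (hx0 : (x₀ : M) = γ 0) (t : I) :
    fK H x₀ x₁ γ 0 t = γ t := by
  have ht0 := t.2.1; have ht1 := t.2.2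
  rw [fK]
  by_cases h : (t:ℝ) ≤ ((0:I):ℝ)/4
  · have ht : (t:ℝ) = 0 := by simp only [coe_I_zero] at h; linarith
    rw [if_pos h, show (4:ℝ)*(t:ℝ) = 0 by rw [ht]; norm_num, cl_zero, h0, hx0]
    congr 1
    exact (Subtype.ext ht.symm : (0:I) = t)
  · have ht : 0 < (t:ℝ) := by simp only [coe_I_zero] at h; by_contra hh; push_neg at hh; linarith
    rw [if_neg h, if_neg (by simp only [coe_I_zero]; intro hh; linarith),
        if_pos (by rw [coe_I_zero]; linarith)]
    rw [show (8*(t:ℝ) - 3*((0:I):ℝ))/(8 - 6*((0:I):ℝ)) = (t:ℝ) by rw [coe_I_zero]; ring_nf, cl_self]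

lemma fK'_zero (h1 : ∀ x : ↥N, H (1, x) = p₀) (hl0 : ℓ 0 = p₀) (t : I) :
    fK' H x₀ x₁ ℓ 0 t = ℓ t := by
  have ht0 := t.2.1; have ht1 := t.2.2
  rw [fK']
  by_cases h : (t:ℝ) ≤ ((0:I):ℝ)/4
  · have ht : (t:ℝ) = 0 := by simp only [coe_I_zero] at h; linarith
    rw [if_pos h, show (1:ℝ) - 4*(t:ℝ) = 1 by rw [ht]; norm_num, cl_one, h1, hl0.symm]
    congr 1
    exact (Subtype.ext ht.symm : (0:I) = t)
  · have ht : 0 < (t:ℝ) := by simp only [coe_I_zero] at h; by_contra hh; push_neg at hh; linarith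
    rw [if_neg h, if_neg (by simp only [coe_I_zero]; intro hh; linarith),
        if_pos (by rw [coe_I_zero]; linarith)]
    rw [show (8*(t:ℝ) - 3*((0:I):ℝ))/(8 - 6*((0:I):ℝ)) = (t:ℝ) by rw [coe_I_zero]; ring_nf, cl_self]

lemma fK_one (t : I) : fK H x₀ x₁ γ 1 t = fG H x₀ x₁ (fF H x₀ x₁ γ) t := by
  have ht0 := t.2.1; have ht1 := t.2.2
  rw [fK, fG, coe_I_one]
  by_cases h1 : (t:ℝ) ≤ 1/4
  · rw [if_pos h1, if_pos h1]
  · rw [if_neg h1, if_neg h1]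
    by_cases h4 : (t:ℝ) ≤ 3/4
    · rw [if_pos h4, fF]
      have hu : ((cl (2*(t:ℝ) - 1/2)) : ℝ) = 2*(t:ℝ) - 1/2 := cl_coe (by linarith) (by linarith)
      rw [hu]
      by_cases h2 : (t:ℝ) ≤ 3*1/8
      · rw [if_pos h2, if_pos (by linarith : 2*(t:ℝ) - 1/2 ≤ 1/4),
            show (1:ℝ) - 4*(2*(t:ℝ) - 1/2) = 3*1 - 8*(t:ℝ) by ring]
      · rw [if_neg h2, if_neg (show ¬ 2*(t:ℝ) - 1/2 ≤ 1/4 by intro hh; exact h2 (by linarith))]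
        by_cases h3 : (t:ℝ) ≤ 1 - 3*1/8
        · rw [if_pos h3, if_pos (by linarith : 2*(t:ℝ) - 1/2 ≤ 3/4),
              show 2*(2*(t:ℝ) - 1/2) - 1/2 = (8*(t:ℝ) - 3*1)/(8 - 6*1) by ring]
        · rw [if_neg h3, if_neg (show ¬ 2*(t:ℝ) - 1/2 ≤ 3/4 by intro hh; exact h3 (by linarith)),
              if_pos (by linarith : (t:ℝ) ≤ 1 - 1/4),
              show 4*(2*(t:ℝ) - 1/2) - 3 = 8*(t:ℝ) - 8 + 3*1 by ring]
    · rw [if_neg h4, if_neg (show ¬ (t:ℝ) ≤ 3*1/8 by intro hh; exact h4 (by linarith)),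
          if_neg (show ¬ (t:ℝ) ≤ 1 - 3*1/8 by intro hh; exact h4 (by linarith)),
          if_neg (show ¬ (t:ℝ) ≤ 1 - 1/4 by intro hh; exact h4 (by linarith))]

lemma fK'_one (t : I) : fK' H x₀ x₁ ℓ 1 t = fF H x₀ x₁ (fG H x₀ x₁ ℓ) t := by
  have ht0 := t.2.1; have ht1 := t.2.2
  rw [fK', fF, coe_I_one]
  by_cases h1 : (t:ℝ) ≤ 1/4
  · rw [if_pos h1, if_pos h1]
  · rw [if_neg h1, if_neg h1]
    by_cases h4 : (t:ℝ) ≤ 3/4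
    · rw [if_pos h4, fG]
      have hu : ((cl (2*(t:ℝ) - 1/2)) : ℝ) = 2*(t:ℝ) - 1/2 := cl_coe (by linarith) (by linarith)
      rw [hu]
      by_cases h2 : (t:ℝ) ≤ 3*1/8
      · rw [if_pos h2, if_pos (by linarith : 2*(t:ℝ) - 1/2 ≤ 1/4),
            show (4:ℝ)*(2*(t:ℝ) - 1/2) = 1 - 3*1 + 8*(t:ℝ) by ring]
      · rw [if_neg h2, if_neg (show ¬ 2*(t:ℝ) - 1/2 ≤ 1/4 by intro hh; exact h2 (by linarith))]
        by_cases h3 : (t:ℝ) ≤ 1 - 3*1/8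
        · rw [if_pos h3, if_pos (by linarith : 2*(t:ℝ) - 1/2 ≤ 3/4),
              show 2*(2*(t:ℝ) - 1/2) - 1/2 = (8*(t:ℝ) - 3*1)/(8 - 6*1) by ring]
        · rw [if_neg h3, if_neg (show ¬ 2*(t:ℝ) - 1/2 ≤ 3/4 by intro hh; exact h3 (by linarith)),
              if_pos (by linarith : (t:ℝ) ≤ 1 - 1/4),
              show (4:ℝ) - 4*(2*(t:ℝ) - 1/2) = 9 - 3*1 - 8*(t:ℝ) by ring]
    · rw [if_neg h4, if_neg (show ¬ (t:ℝ) ≤ 3*1/8 by intro hh; exact h4 (by linarith)),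
          if_neg (show ¬ (t:ℝ) ≤ 1 - 3*1/8 by intro hh; exact h4 (by linarith)),
          if_neg (show ¬ (t:ℝ) ≤ 1 - 1/4 by intro hh; exact h4 (by linarith))]

lemma fF_congr (x₀' x₁' : ↥N) (h₀ : x₀' = x₀) (h₁ : x₁' = x₁) (t : I) :
    fF H x₀' x₁' γ t = fF H x₀ x₁ γ t := by subst h₀; subst h₁; rfl

end PointwiseValues

section Continuity

variable (H : C(I × ↥N, M))

lemma cont_fF (h0 : ∀ x : ↥N, H (0, x) = x) :
    Continuous fun q : {γ : C(I,M) // γ 0 ∈ N ∧ γ 1 ∈ N} × I =>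
      fF H ⟨q.1.1 0, q.1.2.1⟩ ⟨q.1.1 1, q.1.2.2⟩ ⇑(q.1.1) q.2 := by
  have ht : Continuous fun q : {γ : C(I,M) // γ 0 ∈ N ∧ γ 1 ∈ N} × I => (q.2 : ℝ) :=
    continuous_subtype_val.comp continuous_snd
  have hγ : Continuous fun q : {γ : C(I,M) // γ 0 ∈ N ∧ γ 1 ∈ N} × I => q.1.1 :=
    continuous_subtype_val.comp continuous_fst
  have hx0 : Continuous fun q : {γ : C(I,M) // γ 0 ∈ N ∧ γ 1 ∈ N} × I =>
      (⟨q.1.1 0, q.1.2.1⟩ : ↥N) := ((continuous_eval_const (0:I)).comp hγ).subtype_mk _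
  have hx1 : Continuous fun q : {γ : C(I,M) // γ 0 ∈ N ∧ γ 1 ∈ N} × I =>
      (⟨q.1.1 1, q.1.2.2⟩ : ↥N) := ((continuous_eval_const (1:I)).comp hγ).subtype_mk _
  simp only [fF]
  refine Continuous.if_le (contH H (continuous_const.sub (continuous_const.mul ht)) hx0)
    (Continuous.if_le (contEv hγ ((continuous_const.mul ht).sub continuous_const))
      (contH H ((continuous_const.mul ht).sub continuous_const) hx1)
      ht continuous_const ?_)
    ht continuous_const ?_
  · rintro ⟨⟨γ, hγ0, hγ1⟩, t⟩ (heq : (t:ℝ) = 3/4)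
    dsimp only
    rw [heq, show 2*(3/4:ℝ) - 1/2 = 1 by norm_num, cl_one,
        show 4*(3/4:ℝ) - 3 = 0 by norm_num, cl_zero, h0]
  · rintro ⟨⟨γ, hγ0, hγ1⟩, t⟩ (heq : (t:ℝ) = 1/4)
    dsimp only
    rw [if_pos (show (t:ℝ) ≤ 3/4 by rw [heq]; norm_num), heq,
        show (1:ℝ) - 4*(1/4:ℝ) = 0 by norm_num, cl_zero,
        show 2*(1/4:ℝ) - 1/2 = 0 by norm_num, cl_zero, h0]

lemma cont_fG (h1 : ∀ x : ↥N, H (1, x) = p₀) :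
    Continuous fun q : (↥N × ↥N × {γ : C(I,M) // γ 0 = p₀ ∧ γ 1 = p₀}) × I =>
      fG H q.1.1 q.1.2.1 ⇑(q.1.2.2.1) q.2 := by
  have ht : Continuous fun q : (↥N × ↥N × {γ : C(I,M) // γ 0 = p₀ ∧ γ 1 = p₀}) × I =>
      (q.2 : ℝ) := continuous_subtype_val.comp continuous_snd
  have hx0 : Continuous fun q : (↥N × ↥N × {γ : C(I,M) // γ 0 = p₀ ∧ γ 1 = p₀}) × I =>
      q.1.1 := continuous_fst.comp continuous_fst
  have hx1 : Continuous fun q : (↥N × ↥N × {γ : C(I,M) // γ 0 = p₀ ∧ γ 1 = p₀}) × I =>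
      q.1.2.1 := continuous_fst.comp (continuous_snd.comp continuous_fst)
  have hℓ : Continuous fun q : (↥N × ↥N × {γ : C(I,M) // γ 0 = p₀ ∧ γ 1 = p₀}) × I =>
      q.1.2.2.1 :=
    continuous_subtype_val.comp (continuous_snd.comp (continuous_snd.comp continuous_fst))
  simp only [fG]
  refine Continuous.if_le (contH H (continuous_const.mul ht) hx0)
    (Continuous.if_le (contEv hℓ ((continuous_const.mul ht).sub continuous_const))
      (contH H (continuous_const.sub (continuous_const.mul ht)) hx1)
      ht continuous_const ?_)
    ht continuous_const ?_
  · rintro ⟨⟨x₀, x₁, ⟨ℓ, hℓ0, hℓ1⟩⟩, t⟩ (heq : (t:ℝ) = 3/4)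
    dsimp only
    rw [heq, show 2*(3/4:ℝ) - 1/2 = 1 by norm_num, cl_one,
        show (4:ℝ) - 4*(3/4:ℝ) = 1 by norm_num, cl_one, h1, hℓ1]
  · rintro ⟨⟨x₀, x₁, ⟨ℓ, hℓ0, hℓ1⟩⟩, t⟩ (heq : (t:ℝ) = 1/4)
    dsimp only
    rw [if_pos (show (t:ℝ) ≤ 3/4 by rw [heq]; norm_num), heq,
        show (4:ℝ)*(1/4:ℝ) = 1 by norm_num, cl_one,
        show 2*(1/4:ℝ) - 1/2 = 0 by norm_num, cl_zero, h1, hℓ0]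

lemma cont_fK (h0 : ∀ x : ↥N, H (0, x) = x) :
    Continuous fun q : (I × {γ : C(I,M) // γ 0 ∈ N ∧ γ 1 ∈ N}) × I =>
      fK H ⟨q.1.2.1 0, q.1.2.2.1⟩ ⟨q.1.2.1 1, q.1.2.2.2⟩ ⇑(q.1.2.1) q.1.1 q.2 := by
  have hs : Continuous fun q : (I × {γ : C(I,M) // γ 0 ∈ N ∧ γ 1 ∈ N}) × I =>
      (q.1.1 : ℝ) := continuous_subtype_val.comp (continuous_fst.comp continuous_fst)
  have ht : Continuous fun q : (I × {γ : C(I,M) // γ 0 ∈ N ∧ γ 1 ∈ N}) × I =>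
      (q.2 : ℝ) := continuous_subtype_val.comp continuous_snd
  have hγ : Continuous fun q : (I × {γ : C(I,M) // γ 0 ∈ N ∧ γ 1 ∈ N}) × I =>
      q.1.2.1 := continuous_subtype_val.comp (continuous_snd.comp continuous_fst)
  have hx0 : Continuous fun q : (I × {γ : C(I,M) // γ 0 ∈ N ∧ γ 1 ∈ N}) × I =>
      (⟨q.1.2.1 0, q.1.2.2.1⟩ : ↥N) := ((continuous_eval_const (0:I)).comp hγ).subtype_mk _
  have hx1 : Continuous fun q : (I × {γ : C(I,M) // γ 0 ∈ N ∧ γ 1 ∈ N}) × I =>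
      (⟨q.1.2.1 1, q.1.2.2.2⟩ : ↥N) := ((continuous_eval_const (1:I)).comp hγ).subtype_mk _
  simp only [fK]
  refine Continuous.if_le (contH H (continuous_const.mul ht) hx0)
    (Continuous.if_le (contH H ((continuous_const.mul hs).sub (continuous_const.mul ht)) hx0)
      (Continuous.if_le
        (contEv hγ (((continuous_const.mul ht).sub (continuous_const.mul hs)).div
          (continuous_const.sub (continuous_const.mul hs))
          (fun q => ne_of_gt (by have := q.1.1.2.2; linarith))))
        (Continuous.if_le
          (contH H (((continuous_const.mul ht).sub continuous_const).add
            (continuous_const.mul hs)) hx1)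
          (contH H (continuous_const.sub (continuous_const.mul ht)) hx1)
          ht (continuous_const.sub (hs.div_const 4)) ?_)
        ht (continuous_const.sub ((continuous_const.mul hs).div_const 8)) ?_)
      ht ((continuous_const.mul hs).div_const 8) ?_)
    ht (hs.div_const 4) ?_
  · rintro ⟨⟨s, ⟨γ, hγ0, hγ1⟩⟩, t⟩ (heq : (t:ℝ) = 1 - (s:ℝ)/4)
    dsimp only
    rw [heq, show 8*(1 - (s:ℝ)/4) - 8 + 3*(s:ℝ) = 4 - 4*(1 - (s:ℝ)/4) by ring]
  · rintro ⟨⟨s, ⟨γ, hγ0, hγ1⟩⟩, t⟩ (heq : (t:ℝ) = 1 - 3*(s:ℝ)/8)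
    dsimp only
    rw [if_pos (show (t:ℝ) ≤ 1 - (s:ℝ)/4 by rw [heq]; have := s.2.1; linarith), heq,
        show (8*(1 - 3*(s:ℝ)/8) - 3*(s:ℝ))/(8 - 6*(s:ℝ)) = 1 from by
          rw [show 8*(1 - 3*(s:ℝ)/8) - 3*(s:ℝ) = 8 - 6*(s:ℝ) by ring]
          exact div_self (ne_of_gt (by have := s.2.2; linarith)),
        cl_one, show 8*(1 - 3*(s:ℝ)/8) - 8 + 3*(s:ℝ) = 0 by ring, cl_zero, h0]
  · rintro ⟨⟨s, ⟨γ, hγ0, hγ1⟩⟩, t⟩ (heq : (t:ℝ) = 3*(s:ℝ)/8)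
    dsimp only
    rw [if_pos (show (t:ℝ) ≤ 1 - 3*(s:ℝ)/8 by rw [heq]; have := s.2.2; linarith), heq,
        show 3*(s:ℝ) - 8*(3*(s:ℝ)/8) = 0 by ring, cl_zero, h0,
        show (8*(3*(s:ℝ)/8) - 3*(s:ℝ))/(8 - 6*(s:ℝ)) = 0 from by
          rw [show 8*(3*(s:ℝ)/8) - 3*(s:ℝ) = 0 by ring, zero_div],
        cl_zero]
  · rintro ⟨⟨s, ⟨γ, hγ0, hγ1⟩⟩, t⟩ (heq : (t:ℝ) = (s:ℝ)/4)
    dsimp only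
    rw [if_pos (show (t:ℝ) ≤ 3*(s:ℝ)/8 by rw [heq]; have := s.2.1; linarith), heq,
        show 4*((s:ℝ)/4) = 3*(s:ℝ) - 8*((s:ℝ)/4) by ring]

lemma cont_fK' (h1 : ∀ x : ↥N, H (1, x) = p₀) :
    Continuous fun q : (I × (↥N × ↥N × {γ : C(I,M) // γ 0 = p₀ ∧ γ 1 = p₀})) × I =>
      fK' H q.1.2.1 q.1.2.2.1 ⇑(q.1.2.2.2.1) q.1.1 q.2 := by
  have hs : Continuous fun q : (I × (↥N × ↥N × {γ : C(I,M) // γ 0 = p₀ ∧ γ 1 = p₀})) × I =>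
      (q.1.1 : ℝ) := continuous_subtype_val.comp (continuous_fst.comp continuous_fst)
  have ht : Continuous fun q : (I × (↥N × ↥N × {γ : C(I,M) // γ 0 = p₀ ∧ γ 1 = p₀})) × I =>
      (q.2 : ℝ) := continuous_subtype_val.comp continuous_snd
  have hx0 : Continuous fun q : (I × (↥N × ↥N × {γ : C(I,M) // γ 0 = p₀ ∧ γ 1 = p₀})) × I =>
      q.1.2.1 := continuous_fst.comp (continuous_snd.comp continuous_fst)
  have hx1 : Continuous fun q : (I × (↥N × ↥N × {γ : C(I,M) // γ 0 = p₀ ∧ γ 1 = p₀})) × I =>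
      q.1.2.2.1 := (continuous_fst.comp continuous_snd).comp (continuous_snd.comp continuous_fst)
  have hℓ : Continuous fun q : (I × (↥N × ↥N × {γ : C(I,M) // γ 0 = p₀ ∧ γ 1 = p₀})) × I =>
      q.1.2.2.2.1 := continuous_subtype_val.comp
        ((continuous_snd.comp continuous_snd).comp (continuous_snd.comp continuous_fst))
  simp only [fK']
  refine Continuous.if_le (contH H (continuous_const.sub (continuous_const.mul ht)) hx0)
    (Continuous.if_le
      (contH H ((continuous_const.sub (continuous_const.mul hs)).add
        (continuous_const.mul ht)) hx0)
      (Continuous.if_le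
        (contEv hℓ (((continuous_const.mul ht).sub (continuous_const.mul hs)).div
          (continuous_const.sub (continuous_const.mul hs))
          (fun q => ne_of_gt (by have := q.1.1.2.2; linarith))))
        (Continuous.if_le
          (contH H ((continuous_const.sub (continuous_const.mul hs)).sub
            (continuous_const.mul ht)) hx1)
          (contH H ((continuous_const.mul ht).sub continuous_const) hx1)
          ht (continuous_const.sub (hs.div_const 4)) ?_)
        ht (continuous_const.sub ((continuous_const.mul hs).div_const 8)) ?_)
      ht ((continuous_const.mul hs).div_const 8) ?_)
    ht (hs.div_const 4) ?_
  · rintro ⟨⟨s, ⟨x₀, x₁, ⟨ℓ, hℓ0, hℓ1⟩⟩⟩, t⟩ (heq : (t:ℝ) = 1 - (s:ℝ)/4)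
    dsimp only
    rw [heq, show 9 - 3*(s:ℝ) - 8*(1 - (s:ℝ)/4) = 4*(1 - (s:ℝ)/4) - 3 by ring]
  · rintro ⟨⟨s, ⟨x₀, x₁, ⟨ℓ, hℓ0, hℓ1⟩⟩⟩, t⟩ (heq : (t:ℝ) = 1 - 3*(s:ℝ)/8)
    dsimp only
    rw [if_pos (show (t:ℝ) ≤ 1 - (s:ℝ)/4 by rw [heq]; have := s.2.1; linarith), heq,
        show (8*(1 - 3*(s:ℝ)/8) - 3*(s:ℝ))/(8 - 6*(s:ℝ)) = 1 from by
          rw [show 8*(1 - 3*(s:ℝ)/8) - 3*(s:ℝ) = 8 - 6*(s:ℝ) by ring]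
          exact div_self (ne_of_gt (by have := s.2.2; linarith)),
        cl_one, hℓ1, show 9 - 3*(s:ℝ) - 8*(1 - 3*(s:ℝ)/8) = 1 by ring, cl_one, h1]
  · rintro ⟨⟨s, ⟨x₀, x₁, ⟨ℓ, hℓ0, hℓ1⟩⟩⟩, t⟩ (heq : (t:ℝ) = 3*(s:ℝ)/8)
    dsimp only
    rw [if_pos (show (t:ℝ) ≤ 1 - 3*(s:ℝ)/8 by rw [heq]; have := s.2.2; linarith), heq,
        show 1 - 3*(s:ℝ) + 8*(3*(s:ℝ)/8) = 1 by ring, cl_one, h1,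
        show (8*(3*(s:ℝ)/8) - 3*(s:ℝ))/(8 - 6*(s:ℝ)) = 0 from by
          rw [show 8*(3*(s:ℝ)/8) - 3*(s:ℝ) = 0 by ring, zero_div],
        cl_zero, hℓ0]
  · rintro ⟨⟨s, ⟨x₀, x₁, ⟨ℓ, hℓ0, hℓ1⟩⟩⟩, t⟩ (heq : (t:ℝ) = (s:ℝ)/4)
    dsimp only
    rw [if_pos (show (t:ℝ) ≤ 3*(s:ℝ)/8 by rw [heq]; have := s.2.1; linarith), heq,
        show (1:ℝ) - 4*((s:ℝ)/4) = 1 - 3*(s:ℝ) + 8*((s:ℝ)/4) by ring]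

end Continuity

end

end Statement1Aux

open Statement1Aux in
/-- if the inclusion of a subspace `N ⊆ M` is null-homotopic
(homotopic to the constant map with value `p₀`), then the space
`P_N M = {γ ∈ C([0,1], M) : γ(0) ∈ N, γ(1) ∈ N}` is homotopy equivalent to
`N × N × Ω_{p₀} M`. -/
theorem statement1 {M : Type*} [TopologicalSpace M] (N : Set M) (p₀ : M)
    (h : ContinuousMap.Homotopic
      (⟨Subtype.val, continuous_subtype_val⟩ : C(↥N, M))
      (ContinuousMap.const ↥N p₀)) :
    Nonempty (ContinuousMap.HomotopyEquiv
      {γ : C(unitInterval, M) // γ 0 ∈ N ∧ γ 1 ∈ N}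
      (↥N × ↥N × {γ : C(unitInterval, M) // γ 0 = p₀ ∧ γ 1 = p₀})) := by
  obtain ⟨H⟩ := h
  let Hc : C(I × ↥N, M) := H.toContinuousMap
  have h0 : ∀ x : ↥N, Hc (0, x) = x := fun x => H.apply_zero x
  have h1 : ∀ x : ↥N, Hc (1, x) = p₀ := fun x => H.apply_one x
  refine ⟨?_⟩
  -- the maps
  let bigF : C({γ : C(I, M) // γ 0 ∈ N ∧ γ 1 ∈ N} × I, M) :=
    ⟨fun q => fF Hc ⟨q.1.1 0, q.1.2.1⟩ ⟨q.1.1 1, q.1.2.2⟩ ⇑(q.1.1) q.2, cont_fF Hc h0⟩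
  let cF := bigF.curry
  let bigG : C((↥N × ↥N × {γ : C(I, M) // γ 0 = p₀ ∧ γ 1 = p₀}) × I, M) :=
    ⟨fun q => fG Hc q.1.1 q.1.2.1 ⇑(q.1.2.2.1) q.2, cont_fG Hc h1⟩
  let cG := bigG.curry
  let F : C({γ : C(I, M) // γ 0 ∈ N ∧ γ 1 ∈ N},
      ↥N × ↥N × {γ : C(I, M) // γ 0 = p₀ ∧ γ 1 = p₀}) :=
    ⟨fun γ => (⟨γ.1 0, γ.2.1⟩, ⟨γ.1 1, γ.2.2⟩,
        ⟨cF γ, fF_zero Hc ⟨γ.1 0, γ.2.1⟩ ⟨γ.1 1, γ.2.2⟩ ⇑(γ.1) h1,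
          fF_one Hc ⟨γ.1 0, γ.2.1⟩ ⟨γ.1 1, γ.2.2⟩ ⇑(γ.1) h1⟩),
      (((continuous_eval_const (0:I)).comp continuous_subtype_val).subtype_mk _).prodMk
        ((((continuous_eval_const (1:I)).comp continuous_subtype_val).subtype_mk _).prodMk
          (cF.continuous.subtype_mk _))⟩
  let G : C(↥N × ↥N × {γ : C(I, M) // γ 0 = p₀ ∧ γ 1 = p₀},
      {γ : C(I, M) // γ 0 ∈ N ∧ γ 1 ∈ N}) :=
    ⟨fun z => ⟨cG z, by
        show fG Hc z.1 z.2.1 ⇑(z.2.2.1) 0 ∈ N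
        rw [fG_zero Hc z.1 z.2.1 ⇑(z.2.2.1) h0]; exact z.1.2, by
        show fG Hc z.1 z.2.1 ⇑(z.2.2.1) 1 ∈ N
        rw [fG_one Hc z.1 z.2.1 ⇑(z.2.2.1) h0]; exact z.2.1.2⟩,
      cG.continuous.subtype_mk _⟩
  -- the homotopies
  let bigK : C((I × {γ : C(I, M) // γ 0 ∈ N ∧ γ 1 ∈ N}) × I, M) :=
    ⟨fun q => fK Hc ⟨q.1.2.1 0, q.1.2.2.1⟩ ⟨q.1.2.1 1, q.1.2.2.2⟩ ⇑(q.1.2.1) q.1.1 q.2,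
      cont_fK Hc h0⟩
  let cK := bigK.curry
  let bigK' : C((I × (↥N × ↥N × {γ : C(I, M) // γ 0 = p₀ ∧ γ 1 = p₀})) × I, M) :=
    ⟨fun q => fK' Hc q.1.2.1 q.1.2.2.1 ⇑(q.1.2.2.2.1) q.1.1 q.2, cont_fK' Hc h1⟩
  let cK' := bigK'.curry
  let hK : ContinuousMap.Homotopy
      (ContinuousMap.id {γ : C(I, M) // γ 0 ∈ N ∧ γ 1 ∈ N}) (G.comp F) :=
    { toFun := fun p => ⟨cK p, by
        show fK Hc ⟨p.2.1 0, p.2.2.1⟩ ⟨p.2.1 1, p.2.2.2⟩ ⇑(p.2.1) p.1 0 ∈ N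
        rw [fK_at0 Hc ⟨p.2.1 0, p.2.2.1⟩ ⟨p.2.1 1, p.2.2.2⟩ ⇑(p.2.1) p.1 h0]
        exact p.2.2.1, by
        show fK Hc ⟨p.2.1 0, p.2.2.1⟩ ⟨p.2.1 1, p.2.2.2⟩ ⇑(p.2.1) p.1 1 ∈ N
        rw [fK_at1 Hc ⟨p.2.1 0, p.2.2.1⟩ ⟨p.2.1 1, p.2.2.2⟩ ⇑(p.2.1) p.1 h0 rfl]
        exact p.2.2.2⟩
      continuous_toFun := cK.continuous.subtype_mk _
      map_zero_left := fun γ => Subtype.ext (ContinuousMap.ext fun t =>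
        fK_zero Hc ⟨γ.1 0, γ.2.1⟩ ⟨γ.1 1, γ.2.2⟩ ⇑(γ.1) h0 rfl t)
      map_one_left := fun γ => Subtype.ext (ContinuousMap.ext fun t =>
        fK_one Hc ⟨γ.1 0, γ.2.1⟩ ⟨γ.1 1, γ.2.2⟩ ⇑(γ.1) t) }
  let hK' : ContinuousMap.Homotopy
      (ContinuousMap.id (↥N × ↥N × {γ : C(I, M) // γ 0 = p₀ ∧ γ 1 = p₀})) (F.comp G) :=
    { toFun := fun p => (p.2.1, p.2.2.1, ⟨cK' p, by
        show fK' Hc p.2.1 p.2.2.1 ⇑(p.2.2.2.1) p.1 0 = p₀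
        exact fK'_at0 Hc p.2.1 p.2.2.1 ⇑(p.2.2.2.1) p.1 h1, by
        show fK' Hc p.2.1 p.2.2.1 ⇑(p.2.2.2.1) p.1 1 = p₀
        exact fK'_at1 Hc p.2.1 p.2.2.1 ⇑(p.2.2.2.1) p.1 h1 p.2.2.2.2.2⟩)
      continuous_toFun := ((continuous_fst.comp continuous_snd).prodMk
        (((continuous_fst.comp continuous_snd).comp continuous_snd).prodMk
          (cK'.continuous.subtype_mk _)))
      map_zero_left := fun z => Prod.ext rfl (Prod.ext rfl (Subtype.ext
        (ContinuousMap.ext fun t =>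
          fK'_zero Hc z.1 z.2.1 ⇑(z.2.2.1) h1 z.2.2.2.1 t)))
      map_one_left := fun z => Prod.ext
        (Subtype.ext (fG_zero Hc z.1 z.2.1 ⇑(z.2.2.1) h0).symm)
        (Prod.ext (Subtype.ext (fG_one Hc z.1 z.2.1 ⇑(z.2.2.1) h0).symm)
          (Subtype.ext (ContinuousMap.ext fun t =>
            (fK'_one Hc z.1 z.2.1 ⇑(z.2.2.1) t).trans
              (fF_congr Hc z.1 z.2.1 ⇑((G z).1) _ _
                (Subtype.ext (fG_zero Hc z.1 z.2.1 ⇑(z.2.2.1) h0))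
                (Subtype.ext (fG_one Hc z.1 z.2.1 ⇑(z.2.2.1) h0)) t).symm))) }
  exact { toFun := F, invFun := G, left_inv := ⟨hK.symm⟩, right_inv := ⟨hK'.symm⟩ }
end

section
/- Let M be a topological space and N ⊆ M a nonempty subspace. Consider the map p : P_N M → N × N given by p(γ) = (γ(0), γ(1)). Then p admits a continuous section s : N × N → P_N M (i.e. p ∘ s = id_{N×N}) if and only if the inclusion N ↪ M is null-homotopic (homotopic to a constant map). -/
open unitInterval

/-- for a nonempty subspace `N ⊆ M`, the endpoint evaluation
`p : P_N M → N × N`, `p(γ) = (γ(0), γ(1))`, admits a continuous section if and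
only if the inclusion `N ↪ M` is homotopic to a constant map. -/
theorem statement2 {M : Type*} [TopologicalSpace M] (N : Set M) (hN : N.Nonempty) :
    (∃ s : C(↥N × ↥N, {γ : C(unitInterval, M) // γ 0 ∈ N ∧ γ 1 ∈ N}),
        ∀ q : ↥N × ↥N, (s q).1 0 = (q.1 : M) ∧ (s q).1 1 = (q.2 : M)) ↔
      ∃ p₀ : M, ContinuousMap.Homotopic
        (⟨Subtype.val, continuous_subtype_val⟩ : C(↥N, M))
        (ContinuousMap.const ↥N p₀) := by
  obtain ⟨n₀, hn₀⟩ := hN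
  constructor
  · rintro ⟨s, hs⟩
    refine ⟨n₀, ⟨?_⟩⟩
    have hc : Continuous fun x : ↥N => ((s (x, ⟨n₀, hn₀⟩)).1 : C(unitInterval, M)) :=
      continuous_subtype_val.comp (s.continuous.comp (by continuity))
    refine ⟨⟨fun p => (s (p.2, ⟨n₀, hn₀⟩)).1 p.1, ?_⟩, ?_, ?_⟩
    · exact continuous_eval.comp ((hc.comp continuous_snd).prodMk continuous_fst)
    · intro x; exact (hs (x, ⟨n₀, hn₀⟩)).1
    · intro x; exact (hs (x, ⟨n₀, hn₀⟩)).2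
  · rintro ⟨p₀, ⟨H⟩⟩
    set F : (↥N × ↥N) × unitInterval → M := fun q =>
      if ((q.2 : ℝ)) ≤ 1 / 2 then H (Set.projIcc 0 1 zero_le_one (2 * (q.2 : ℝ)), q.1.1)
      else H (Set.projIcc 0 1 zero_le_one (2 - 2 * (q.2 : ℝ)), q.1.2) with hF
    have hFc : Continuous F := by
      apply Continuous.if_le
      · exact H.continuous.comp
          (((continuous_projIcc.comp (continuous_const.mul
            (continuous_subtype_val.comp continuous_snd)))).prodMk
            (continuous_fst.comp continuous_fst))
      · exact H.continuous.comp
          (((continuous_projIcc.comp (continuous_const.sub (continuous_const.mul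
            (continuous_subtype_val.comp continuous_snd)))).prodMk
            (continuous_snd.comp continuous_fst)))
      · exact continuous_subtype_val.comp continuous_snd
      · exact continuous_const
      · intro q hq
        have h1 : (2 : ℝ) * (q.2 : ℝ) = 1 := by rw [hq]; ring
        have h2 : (2 : ℝ) - 2 * (q.2 : ℝ) = 1 := by rw [hq]; ring
        rw [h2, h1]
        have hp : Set.projIcc (0:ℝ) 1 zero_le_one 1 = 1 := by
          simp [Set.projIcc, unitInterval]
        rw [hp, H.apply_one, H.apply_one]; rfl
    have hF0 : ∀ q : ↥N × ↥N, F (q, 0) = (q.1 : M) := by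
      intro q
      have : ((0 : unitInterval) : ℝ) ≤ 1 / 2 := by norm_num
      simp only [hF, this, if_pos]
      have hp : Set.projIcc (0:ℝ) 1 zero_le_one (2 * ((0 : unitInterval) : ℝ)) = 0 := by
        simp [Set.projIcc, unitInterval]
      rw [hp, H.apply_zero]; rfl
    have hF1 : ∀ q : ↥N × ↥N, F (q, 1) = (q.2 : M) := by
      intro q
      have h : ¬ (((1 : unitInterval) : ℝ) ≤ 1 / 2) := by norm_num
      simp only [hF, h, if_neg, if_false]
      have hp : Set.projIcc (0:ℝ) 1 zero_le_one (2 - 2 * ((1 : unitInterval) : ℝ)) = 0 := by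
        norm_num
      rw [hp, H.apply_zero]; rfl
    refine ⟨⟨fun q => ⟨⟨fun t => F (q, t), ?_⟩, ?_, ?_⟩, ?_⟩, ?_⟩
    · exact hFc.comp (Continuous.prodMk_right q)
    · show F (q, 0) ∈ N; rw [hF0 q]; exact q.1.2
    · show F (q, 1) ∈ N; rw [hF1 q]; exact q.2.2
    · apply Continuous.subtype_mk
      exact (ContinuousMap.curry ⟨F, hFc⟩).continuous
    · intro q
      exact ⟨hF0 q, hF1 q⟩
end

section
/- Let K be a commutative ring and k ∈ ℕ. Let A = ⊕_{i∈ℕ} A_i be a graded K-module and β : A × A → K a K-bilinear form such that β(b, c) = 0 whenever b ∈ A_i, c ∈ A_j are homogeneous with i + j ≠ k. Let B = ⊕_{i∈ℕ} B_i be a graded associative K-algebra with product ⋆ (so B_i ⋆ B_j ⊆ B_{i+j}). Define a K-bilinear product μ on A ⊗ A ⊗ B by setting, for homogeneous a, b, c, d ∈ A and homogeneous x, y ∈ B, μ((a ⊗ b ⊗ x) ⊗ (c ⊗ d ⊗ y)) = (−1)^{|x|(|c|+|d|+k)} β(b, c) · (a ⊗ d ⊗ (x ⋆ y)), where |·| denotes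 the degree of a homogeneous element. Then μ is associative: μ(μ(X ⊗ Y) ⊗ Z) = μ(X ⊗ μ(Y ⊗ Z)) for all X, Y, Z ∈ A ⊗ A ⊗ B. -/
open TensorProduct

/-- let `A = ⊕ᵢ Aᵢ` be a graded `K`-module with a bilinear form `β`
vanishing on homogeneous elements whose degrees do not sum to `k`, and let
`B = ⊕ᵢ Bᵢ` be a graded associative `K`-algebra with product `⋆`. Then the
product `μ` on `A ⊗ A ⊗ B` defined on homogeneous elements by
`μ((a⊗b⊗x) ⊗ (c⊗d⊗y)) = (−1)^{|x|(|c|+|d|+k)} β(b,c) (a ⊗ d ⊗ (x ⋆ y))`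
is associative. -/
theorem statement7 {K : Type*} [CommRing K] (k : ℕ)
    {V : Type*} [AddCommGroup V] [Module K V]
    (𝒜 : ℕ → Submodule K V) [DirectSum.Decomposition 𝒜]
    {B : Type*} [Ring B] [Algebra K B]
    (ℬ : ℕ → Submodule K B) [GradedRing ℬ]
    (β : V →ₗ[K] V →ₗ[K] K)
    (hβ : ∀ (i j : ℕ), i + j ≠ k → ∀ b ∈ 𝒜 i, ∀ c ∈ 𝒜 j, β b c = 0)
    (μ : (V ⊗[K] (V ⊗[K] B)) →ₗ[K] (V ⊗[K] (V ⊗[K] B)) →ₗ[K] (V ⊗[K] (V ⊗[K] B)))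
    (hμ : ∀ (da db dx dc dd dy : ℕ),
      ∀ a ∈ 𝒜 da, ∀ b ∈ 𝒜 db, ∀ x ∈ ℬ dx, ∀ c ∈ 𝒜 dc, ∀ d ∈ 𝒜 dd, ∀ y ∈ ℬ dy,
        μ (a ⊗ₜ[K] (b ⊗ₜ[K] x)) (c ⊗ₜ[K] (d ⊗ₜ[K] y)) =
          ((-1 : K) ^ (dx * (dc + dd + k))) • (β b c • (a ⊗ₜ[K] (d ⊗ₜ[K] (x * y))))) :
    ∀ X Y Z : V ⊗[K] (V ⊗[K] B), μ (μ X Y) Z = μ X (μ Y Z) := by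
  -- homogeneous induction principles
  have hVind : ∀ (p : V → Prop) (zero : p 0) (homog : ∀ i (a : V), a ∈ 𝒜 i → p a)
      (add : ∀ m m', p m → p m' → p (m + m')), ∀ v, p v := by
    intro p h0 hh hadd
    exact DirectSum.Decomposition.inductionOn 𝒜 h0 (fun {i} m => hh i m m.2) hadd
  have hBind : ∀ (p : B → Prop) (zero : p 0) (homog : ∀ i (x : B), x ∈ ℬ i → p x)
      (add : ∀ m m', p m → p m' → p (m + m')), ∀ v, p v := by
    intro p h0 hh hadd
    exact DirectSum.Decomposition.inductionOn ℬ h0 (fun {i} m => hh i m m.2) hadd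
  -- the key computation on homogeneous simple tensors
  have key : ∀ (da db dx dc dd dy de df dz : ℕ),
      ∀ a ∈ 𝒜 da, ∀ b ∈ 𝒜 db, ∀ x ∈ ℬ dx, ∀ c ∈ 𝒜 dc, ∀ d ∈ 𝒜 dd, ∀ y ∈ ℬ dy,
      ∀ e ∈ 𝒜 de, ∀ f ∈ 𝒜 df, ∀ z ∈ ℬ dz,
      μ (μ (a ⊗ₜ[K] (b ⊗ₜ[K] x)) (c ⊗ₜ[K] (d ⊗ₜ[K] y))) (e ⊗ₜ[K] (f ⊗ₜ[K] z)) =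
      μ (a ⊗ₜ[K] (b ⊗ₜ[K] x)) (μ (c ⊗ₜ[K] (d ⊗ₜ[K] y)) (e ⊗ₜ[K] (f ⊗ₜ[K] z))) := by
    intro da db dx dc dd dy de df dz a ha b hb x hx c hc d hd y hy e he f hf z hz
    rw [hμ da db dx dc dd dy a ha b hb x hx c hc d hd y hy,
        hμ dc dd dy de df dz c hc d hd y hy e he f hf z hz]
    rw [map_smul, map_smul, LinearMap.smul_apply, LinearMap.smul_apply, map_smul, map_smul]
    rw [hμ da dd (dx + dy) de df dz a ha d hd (x * y) (SetLike.mul_mem_graded hx hy)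
          e he f hf z hz,
        hμ da db dx dc df (dy + dz) a ha b hb x hx c hc f hf (y * z)
          (SetLike.mul_mem_graded hy hz)]
    by_cases hbc : db + dc = k
    · by_cases hde : dd + de = k
      · have hsign : ((-1 : K) ^ (dx * (dc + dd + k))) * ((-1 : K) ^ ((dx + dy) * (de + df + k)))
            = ((-1 : K) ^ (dy * (de + df + k))) * ((-1 : K) ^ (dx * (dc + df + k))) := by
          rw [← pow_add, ← pow_add]
          have h2 : dx * (dc + dd + k) + (dx + dy) * (de + df + k)
              = dy * (de + df + k) + dx * (dc + df + k) + 2 * (dx * k) := by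
            rw [← hde]; ring
          rw [h2, pow_add, pow_mul]
          norm_num
        simp only [smul_smul]
        rw [mul_assoc x y z]
        congr 1
        linear_combination (β b c * β d e) * hsign
      · have h0 : β d e = 0 := hβ dd de hde d hd e he
        simp [h0]
    · have h0 : β b c = 0 := hβ db dc hbc b hb c hc
      simp [h0]
  intro X Y Z
  induction X using TensorProduct.induction_on with
  | zero => simp
  | add X₁ X₂ hX₁ hX₂ => simp only [map_add, LinearMap.add_apply, hX₁, hX₂]
  | tmul a p =>
    induction p using TensorProduct.induction_on with
    | zero => simp
    | add p₁ p₂ hp₁ hp₂ =>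
      simp only [tmul_add, map_add, LinearMap.add_apply, hp₁, hp₂]
    | tmul b x =>
      induction Y using TensorProduct.induction_on with
      | zero => simp
      | add Y₁ Y₂ hY₁ hY₂ => simp only [map_add, LinearMap.add_apply, hY₁, hY₂]
      | tmul c q =>
        induction q using TensorProduct.induction_on with
        | zero => simp
        | add q₁ q₂ hq₁ hq₂ =>
          simp only [tmul_add, map_add, LinearMap.add_apply, hq₁, hq₂]
        | tmul d y =>
          induction Z using TensorProduct.induction_on with
          | zero => simp
          | add Z₁ Z₂ hZ₁ hZ₂ => simp only [map_add, LinearMap.add_apply, hZ₁, hZ₂]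
          | tmul e r =>
            induction r using TensorProduct.induction_on with
            | zero => simp
            | add r₁ r₂ hr₁ hr₂ =>
              simp only [tmul_add, map_add, LinearMap.add_apply, hr₁, hr₂]
            | tmul f z =>
              induction a using hVind with
              | zero => simp
              | add a₁ a₂ ha₁ ha₂ =>
                simp only [add_tmul, map_add, LinearMap.add_apply, ha₁, ha₂]
              | homog da a ha =>
                induction b using hVind with
                | zero => simp
                | add b₁ b₂ hb₁ hb₂ =>
                  simp only [add_tmul, tmul_add, map_add, LinearMap.add_apply, hb₁, hb₂]
                | homog db b hb =>
                  induction x using hBind with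
                  | zero => simp
                  | add x₁ x₂ hx₁ hx₂ =>
                    simp only [tmul_add, map_add, LinearMap.add_apply, hx₁, hx₂]
                  | homog dx x hx =>
                    induction c using hVind with
                    | zero => simp
                    | add c₁ c₂ hc₁ hc₂ =>
                      simp only [add_tmul, map_add, LinearMap.add_apply, hc₁, hc₂]
                    | homog dc c hc =>
                      induction d using hVind with
                      | zero => simp
                      | add d₁ d₂ hd₁ hd₂ =>
                        simp only [add_tmul, tmul_add, map_add, LinearMap.add_apply, hd₁, hd₂]
                      | homog dd d hd =>
                        induction y using hBind with
                        | zero => simp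
                        | add y₁ y₂ hy₁ hy₂ =>
                          simp only [tmul_add, map_add, LinearMap.add_apply, hy₁, hy₂]
                        | homog dy y hy =>
                          induction e using hVind with
                          | zero => simp
                          | add e₁ e₂ he₁ he₂ =>
                            simp only [add_tmul, map_add, LinearMap.add_apply, he₁, he₂]
                          | homog de e he =>
                            induction f using hVind with
                            | zero => simp
                            | add f₁ f₂ hf₁ hf₂ =>
                              simp only [add_tmul, tmul_add, map_add, LinearMap.add_apply,
                                hf₁, hf₂]
                            | homog df f hf =>
                              induction z using hBind with
                              | zero => simp
                              | add z₁ z₂ hz₁ hz₂ =>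
                                simp only [tmul_add, map_add, LinearMap.add_apply, hz₁, hz₂]
                              | homog dz z hz =>
                                exact key da db dx dc dd dy de df dz a ha b hb x hx
                                  c hc d hd y hy e he f hf z hz
end

section
/- Let K be a commutative ring and k, n ∈ ℕ. Let A = ⊕_{i∈ℤ} A_i be a graded K-module and β : A × A → K a bilinear form with β(b, c) = 0 for homogeneous b ∈ A_i, c ∈ A_j unless i + j = k. Let B = ⊕_{i∈ℤ} B_i be a graded associative K-algebra with product ⋆, let C = ⊕_{i∈ℤ} C_i be a graded K-module, and let φ : C → B be a K-linear map with φ(C_i) ⊆ B_{i−n}. On A ⊗ A ⊗ B define, for homogeneous elements, the product μ((a⊗b⊗x) ⊗ (c⊗d⊗y)) = (−1)^{|x|(|c|+|d|+k)} β(b, c) (a ⊗ d ⊗ (x ⋆ y)) and the pairing ν(A' ⊗ (a⊗b⊗x)) = (−1)^{(n+|A'|)(n+|a|+|b|)} a ⊗ b ⊗ (φ(A') ⋆ x). Then for all homogeneous A' ∈ C and homogeneous X = a⊗b⊗x, Y = c⊗d⊗y in A ⊗ A ⊗ B: (i) ν(A' ⊗ μ(X ⊗ Y)) = μ(ν(A'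 ⊗ X) ⊗ Y); and (ii) if in addition φ(A') is central in the graded sense, i.e. φ(A') ⋆ z = (−1)^{|φ(A')| |z|} z ⋆ φ(A') for all homogeneous z ∈ B, then ν(A' ⊗ μ(X ⊗ Y)) = (−1)^{(|A'|+n)(|X|+k)} μ(X ⊗ ν(A' ⊗ Y)), where |X| = |a| + |b| + |x|. -/
open TensorProduct

/-- the algebraic sign computation. Let `A` be a `ℤ`-graded
`K`-module with a bilinear form `β` vanishing on homogeneous elements of degrees
not summing to `k`, `B` a `ℤ`-graded associative `K`-algebra, and
`φ : C → B` linear lowering degree by `n`. With the product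
`μ((a⊗b⊗x) ⊗ (c⊗d⊗y)) = (−1)^{|x|(|c|+|d|+k)} β(b,c) (a ⊗ d ⊗ (x⋆y))` and the
pairing `ν(A' ⊗ (a⊗b⊗x)) = (−1)^{(n+|A'|)(n+|a|+|b|)} a ⊗ b ⊗ (φ(A') ⋆ x)`:
(i) `ν(A' ⊗ μ(X ⊗ Y)) = μ(ν(A' ⊗ X) ⊗ Y)`, and
(ii) if `φ(A')` is central in the graded sense then
`ν(A' ⊗ μ(X ⊗ Y)) = (−1)^{(|A'|+n)(|X|+k)} μ(X ⊗ ν(A' ⊗ Y))`. -/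
theorem statement12 {K : Type*} [CommRing K] (k n : ℕ)
    {V : Type*} [AddCommGroup V] [Module K V]
    (𝒜 : ℤ → Submodule K V) [DirectSum.Decomposition 𝒜]
    {B : Type*} [Ring B] [Algebra K B]
    (ℬ : ℤ → Submodule K B) [GradedRing ℬ]
    {W : Type*} [AddCommGroup W] [Module K W]
    (𝒞 : ℤ → Submodule K W) [DirectSum.Decomposition 𝒞]
    (β : V →ₗ[K] V →ₗ[K] K)
    (hβ : ∀ (i j : ℤ), i + j ≠ (k : ℤ) → ∀ b ∈ 𝒜 i, ∀ c ∈ 𝒜 j, β b c = 0)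
    (φ : W →ₗ[K] B)
    (hφ : ∀ (i : ℤ), ∀ w ∈ 𝒞 i, φ w ∈ ℬ (i - n))
    (μ : (V ⊗[K] (V ⊗[K] B)) →ₗ[K] (V ⊗[K] (V ⊗[K] B)) →ₗ[K] (V ⊗[K] (V ⊗[K] B)))
    (hμ : ∀ (da db dx dc dd dy : ℤ),
      ∀ a ∈ 𝒜 da, ∀ b ∈ 𝒜 db, ∀ x ∈ ℬ dx, ∀ c ∈ 𝒜 dc, ∀ d ∈ 𝒜 dd, ∀ y ∈ ℬ dy,
        μ (a ⊗ₜ[K] (b ⊗ₜ[K] x)) (c ⊗ₜ[K] (d ⊗ₜ[K] y)) =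
          ((Int.negOnePow (dx * (dc + dd + k)) : ℤ)) •
            (β b c • (a ⊗ₜ[K] (d ⊗ₜ[K] (x * y)))))
    (ν : W →ₗ[K] (V ⊗[K] (V ⊗[K] B)) →ₗ[K] (V ⊗[K] (V ⊗[K] B)))
    (hν : ∀ (dA da db dx : ℤ), ∀ A' ∈ 𝒞 dA, ∀ a ∈ 𝒜 da, ∀ b ∈ 𝒜 db, ∀ x ∈ ℬ dx,
        ν A' (a ⊗ₜ[K] (b ⊗ₜ[K] x)) =
          ((Int.negOnePow ((n + dA) * (n + da + db)) : ℤ)) •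
            (a ⊗ₜ[K] (b ⊗ₜ[K] (φ A' * x)))) :
    ∀ (dA da db dx dc dd dy : ℤ), ∀ A' ∈ 𝒞 dA,
      ∀ a ∈ 𝒜 da, ∀ b ∈ 𝒜 db, ∀ x ∈ ℬ dx, ∀ c ∈ 𝒜 dc, ∀ d ∈ 𝒜 dd, ∀ y ∈ ℬ dy,
        (ν A' (μ (a ⊗ₜ[K] (b ⊗ₜ[K] x)) (c ⊗ₜ[K] (d ⊗ₜ[K] y))) =
          μ (ν A' (a ⊗ₜ[K] (b ⊗ₜ[K] x))) (c ⊗ₜ[K] (d ⊗ₜ[K] y))) ∧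
        ((∀ (j : ℤ), ∀ z ∈ ℬ j,
            φ A' * z = ((Int.negOnePow ((dA - n) * j) : ℤ)) • (z * φ A')) →
          ν A' (μ (a ⊗ₜ[K] (b ⊗ₜ[K] x)) (c ⊗ₜ[K] (d ⊗ₜ[K] y))) =
            ((Int.negOnePow ((dA + n) * ((da + db + dx) + k)) : ℤ)) •
              μ (a ⊗ₜ[K] (b ⊗ₜ[K] x)) (ν A' (c ⊗ₜ[K] (d ⊗ₜ[K] y)))) := by
  intro dA da db dx dc dd dy A' hA a ha b hb x hx c hc d hd y hy
  have hφA : φ A' ∈ ℬ (dA - n) := hφ dA A' hA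
  have hxy : x * y ∈ ℬ (dx + dy) := SetLike.mul_mem_graded hx hy
  have hφx : φ A' * x ∈ ℬ (dA - n + dx) := SetLike.mul_mem_graded hφA hx
  have hφy : φ A' * y ∈ ℬ (dA - n + dy) := SetLike.mul_mem_graded hφA hy
  set e : K := β b c with he
  -- LHS computation
  have hL : ν A' (μ (a ⊗ₜ[K] (b ⊗ₜ[K] x)) (c ⊗ₜ[K] (d ⊗ₜ[K] y))) =
      ((Int.negOnePow (dx * (dc + dd + k) + (n + dA) * (n + da + dd)) : ℤ)) •
        (e • (a ⊗ₜ[K] (d ⊗ₜ[K] (φ A' * (x * y))))) := by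
    rw [hμ da db dx dc dd dy a ha b hb x hx c hc d hd y hy,
      map_zsmul, map_smul, hν dA da dd (dx + dy) A' hA a ha d hd (x * y) hxy,
      smul_comm e, smul_smul, Int.negOnePow_add]
    push_cast
    ring_nf
  -- key parity helper
  have key : ∀ E1 E2 : ℤ, (db + dc = (k : ℤ) → Even (E1 - E2)) →
      ∀ T : V ⊗[K] (V ⊗[K] B),
      ((Int.negOnePow E1 : ℤ)) • (e • T) = ((Int.negOnePow E2 : ℤ)) • (e • T) := by
    intro E1 E2 hpar T
    by_cases hk : db + dc = (k : ℤ)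
    · rw [(Int.negOnePow_eq_iff E1 E2).2 (hpar hk)]
    · rw [he, hβ db dc hk b hb c hc, zero_smul, smul_zero, smul_zero]
  constructor
  · -- part (i)
    have hR : μ (ν A' (a ⊗ₜ[K] (b ⊗ₜ[K] x))) (c ⊗ₜ[K] (d ⊗ₜ[K] y)) =
        ((Int.negOnePow ((n + dA) * (n + da + db) + (dA - n + dx) * (dc + dd + k)) : ℤ)) •
          (e • (a ⊗ₜ[K] (d ⊗ₜ[K] (φ A' * (x * y))))) := by
      rw [hν dA da db dx A' hA a ha b hb x hx, map_zsmul μ, LinearMap.smul_apply,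
        hμ da db (dA - n + dx) dc dd dy a ha b hb (φ A' * x) hφx c hc d hd y hy,
        mul_assoc (φ A') x y, smul_smul, ← Units.val_mul, ← Int.negOnePow_add]
    rw [hL, hR]
    exact key _ _ (fun hk => ⟨n * (dd - db) - (dA - n) * k, by
      have hdc : dc = (k : ℤ) - db := by omega
      subst hdc; ring⟩) _
  · -- part (ii)
    intro hcen
    have hsq : ∀ E : ℤ, ((Int.negOnePow E : ℤ)) * ((Int.negOnePow E : ℤ)) = 1 := by
      intro E; rw [← Units.val_mul, ← Int.negOnePow_add, Int.negOnePow_even _ ⟨E, rfl⟩,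
        Units.val_one]
    have hswap : x * φ A' = ((Int.negOnePow ((dA - n) * dx) : ℤ)) • (φ A' * x) := by
      rw [hcen dx x hx, smul_smul, hsq, one_smul]
    have hmul : x * (φ A' * y) = ((Int.negOnePow ((dA - n) * dx) : ℤ)) • (φ A' * (x * y)) := by
      rw [← mul_assoc, hswap, smul_mul_assoc, mul_assoc]
    have hR : μ (a ⊗ₜ[K] (b ⊗ₜ[K] x)) (ν A' (c ⊗ₜ[K] (d ⊗ₜ[K] y))) =
        ((Int.negOnePow ((n + dA) * (n + dc + dd) + dx * (dc + dd + k)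
            + (dA - n) * dx) : ℤ)) •
          (e • (a ⊗ₜ[K] (d ⊗ₜ[K] (φ A' * (x * y))))) := by
      rw [hν dA dc dd dy A' hA c hc d hd y hy, map_zsmul (μ (a ⊗ₜ[K] (b ⊗ₜ[K] x))),
        hμ da db dx dc dd (dA - n + dy) a ha b hb x hx c hc d hd (φ A' * y) hφy,
        hmul, tmul_smul, tmul_smul, smul_comm e ((Int.negOnePow ((dA - n) * dx) : ℤ)),
        smul_smul, smul_smul, ← Units.val_mul, ← Units.val_mul,
        ← Int.negOnePow_add, ← Int.negOnePow_add]
    rw [hL, hR, smul_smul, ← Units.val_mul, ← Int.negOnePow_add]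
    exact key _ _ (fun hk => ⟨-(dA + n) * (k + dx) + n * dx, by
      have hdc : dc = (k : ℤ) - db := by omega
      subst hdc; ring⟩) _
end
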